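/- Let G be a 3-uniform 4-partite hypergraph on parts A, B, C, U. Construct the 3-layered DAG G' with layers V₁ = U, V₂ = (A×B) ⊔ (B×C) ⊔ (C×A), V₃ = (A×B) ⊔ C, with edges: every vertex of V₁ to every vertex of V₃; a V₂ vertex to a V₃ vertex whenever their labels are consistent; and u ∈ V₁ to (x,y)₂ ∈ V₂ iff {u,x,y} is NOT a hyperedge of G. Then for all a ∈ A, b ∈ B, c ∈ C: the set {a,b,c,u} forms a 4-hyperclique in G for some u ∈ U if and only if {a,b,c} is a hyperedge of G and the pair ((a,b)₃, c₃) has an LCA in V₁. -/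
import Mathlib


variable {V : Type*}

/-- Reflexive-transitive reachability along directed edges. -/
def Reach (E : V → V → Prop) : V → V → Prop := Relation.ReflTransGen E

/-- Set of (reflexive) ancestors of `u`. -/
def Anc (E : V → V → Prop) (u : V) : Set V := {x | Reach E x u}

/-- `w` is a lowest common ancestor of `u` and `v`. -/
def IsLCA (E : V → V → Prop) (u v w : V) : Prop :=
  Reach E w u ∧ Reach E w v ∧
    ∀ y, y ≠ w → Reach E w y → ¬(Reach E y u ∧ Reach E y v)

/-- The set of LCAs of `u` and `v`. -/
def LCAset (E : V → V → Prop) (u v : V) : Set V := {w | IsLCA E u v w}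

/-- The directed graph given by `E` is acyclic (reachability is antisymmetric). -/
def IsDAG (E : V → V → Prop) : Prop :=
  ∀ u v : V, Reach E u v → Reach E v u → u = v

section Hyperclique

variable {α β γ υ : Type*}

/-- The vertex set of the reduction graph `G'`:
layer `V₁ = U`, layer `V₂ = (A×B) ⊔ (B×C) ⊔ (C×A)`, layer `V₃ = (A×B) ⊔ C`. -/
abbrev HCVert (α β γ υ : Type*) :=
  υ ⊕ ((α × β ⊕ (β × γ ⊕ γ × α)) ⊕ (α × β ⊕ γ))

/-- Edges of the reduction graph `G'`, given the hyperedge predicates of the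
3-uniform 4-partite hypergraph `G` (`EABU a b u` means `{a,b,u}` is a hyperedge,
etc.). -/
def HCEdge (EABU : α → β → υ → Prop) (EBCU : β → γ → υ → Prop)
    (ECAU : γ → α → υ → Prop) : HCVert α β γ υ → HCVert α β γ υ → Prop
  -- every vertex of V₁ to every vertex of V₃
  | .inl _, .inr (.inr _) => True
  -- u ∈ V₁ to a V₂ vertex iff the corresponding triple is NOT a hyperedge
  | .inl u, .inr (.inl (.inl (a, b))) => ¬ EABU a b u
  | .inl u, .inr (.inl (.inr (.inl (b, c)))) => ¬ EBCU b c u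
  | .inl u, .inr (.inl (.inr (.inr (c, a)))) => ¬ ECAU c a u
  -- V₂ to V₃ whenever the labels are consistent
  | .inr (.inl (.inl (a, b))), .inr (.inr (.inl (a', b'))) => a = a' ∧ b = b'
  | .inr (.inl (.inl _)), .inr (.inr (.inr _)) => True
  | .inr (.inl (.inr (.inl (b, _)))), .inr (.inr (.inl (_, b'))) => b = b'
  | .inr (.inl (.inr (.inl (_, c)))), .inr (.inr (.inr c')) => c = c'
  | .inr (.inl (.inr (.inr (_, a)))), .inr (.inr (.inl (a', _))) => a = a'
  | .inr (.inl (.inr (.inr (c, _)))), .inr (.inr (.inr c')) => c = c'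
  | _, _ => False

lemma no_out_v3 (EABU : α → β → υ → Prop) (EBCU : β → γ → υ → Prop)
    (ECAU : γ → α → υ → Prop) (t : α × β ⊕ γ) (y : HCVert α β γ υ) :
    ¬ HCEdge EABU EBCU ECAU (.inr (.inr t)) y := by
  rcases t with t | t <;>
    rcases y with y | (y | y) <;> simp [HCEdge]

lemma reach_v3 (EABU : α → β → υ → Prop) (EBCU : β → γ → υ → Prop)
    (ECAU : γ → α → υ → Prop) (t : α × β ⊕ γ) (y : HCVert α β γ υ)
    (h : Reach (HCEdge EABU EBCU ECAU) (.inr (.inr t)) y) :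
    y = .inr (.inr t) := by
  rcases h.cases_head with h | ⟨z, hz, _⟩
  · exact h.symm
  · exact absurd hz (no_out_v3 _ _ _ _ _)

lemma v2_to_v3 (EABU : α → β → υ → Prop) (EBCU : β → γ → υ → Prop)
    (ECAU : γ → α → υ → Prop) (p : α × β ⊕ (β × γ ⊕ γ × α)) (y : HCVert α β γ υ)
    (h : HCEdge EABU EBCU ECAU (.inr (.inl p)) y) :
    ∃ t, y = Sum.inr (Sum.inr t) := by
  rcases p with p | (p | p) <;> rcases y with y | (y | y) <;>
    first
    | exact ⟨y, rfl⟩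
    | (exfalso; revert h; obtain ⟨x1, x2⟩ := p; simp [HCEdge])

lemma reach_v2 (EABU : α → β → υ → Prop) (EBCU : β → γ → υ → Prop)
    (ECAU : γ → α → υ → Prop) (p : α × β ⊕ (β × γ ⊕ γ × α)) (y : HCVert α β γ υ)
    (h : Reach (HCEdge EABU EBCU ECAU) (.inr (.inl p)) y) :
    y = .inr (.inl p) ∨ HCEdge EABU EBCU ECAU (.inr (.inl p)) y := by
  rcases h.cases_head with h | ⟨z, hz, hr⟩
  · exact Or.inl h.symm
  · obtain ⟨t, rfl⟩ := v2_to_v3 _ _ _ _ _ hz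
    rw [reach_v3 _ _ _ _ _ hr]
    exact Or.inr hz

theorem stmt_14 [Fintype α] [Fintype β] [Fintype γ] [Fintype υ]
    (EABC : α → β → γ → Prop) (EABU : α → β → υ → Prop)
    (EBCU : β → γ → υ → Prop) (ECAU : γ → α → υ → Prop) :
    ∀ (a : α) (b : β) (c : γ),
      (∃ u : υ, EABC a b c ∧ EABU a b u ∧ EBCU b c u ∧ ECAU c a u) ↔
        (EABC a b c ∧
          ∃ u : υ,
            IsLCA (HCEdge EABU EBCU ECAU)
              (.inr (.inr (.inl (a, b)))) (.inr (.inr (.inr c))) (.inl u)) := by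
  classical
  intro a b c
  constructor
  · rintro ⟨u, habc, hab, hbc, hca⟩
    refine ⟨habc, u, Relation.ReflTransGen.single trivial,
      Relation.ReflTransGen.single trivial, ?_⟩
    rintro y hy hr ⟨h1, h2⟩
    rcases hr.cases_head with h | ⟨z, hz, hr'⟩
    · exact hy h.symm
    rcases z with z | (p | t)
    · exact hz
    · rcases reach_v2 _ _ _ _ _ hr' with rfl | he
      · -- y is the V₂ vertex p; it has edges to both targets
        rcases reach_v2 _ _ _ _ _ h1 with h1' | he1
        · exact absurd h1' (by simp)
        rcases reach_v2 _ _ _ _ _ h2 with h2' | he2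
        · exact absurd h2' (by simp)
        rcases p with ⟨a', b'⟩ | (⟨b', c'⟩ | ⟨c', a'⟩)
        · obtain ⟨rfl, rfl⟩ : a' = a ∧ b' = b := he1
          exact hz hab
        · obtain rfl : b' = b := he1
          obtain rfl : c' = c := he2
          exact hz hbc
        · obtain rfl : a' = a := he1
          obtain rfl : c' = c := he2
          exact hz hca
      · obtain ⟨t, rfl⟩ := v2_to_v3 _ _ _ _ _ he
        have e1 := reach_v3 _ _ _ _ _ h1
        have e2 := reach_v3 _ _ _ _ _ h2
        exact absurd (e2.trans e1.symm) (by simp)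
    · have hy3 := reach_v3 _ _ _ _ _ hr'
      subst hy3
      have e1 := reach_v3 _ _ _ _ _ h1
      have e2 := reach_v3 _ _ _ _ _ h2
      exact absurd (e2.trans e1.symm) (by simp)
  · rintro ⟨habc, u, _, _, hmin⟩
    refine ⟨u, habc, ?_, ?_, ?_⟩
    · by_contra h
      exact hmin (.inr (.inl (.inl (a, b)))) (by simp)
        (Relation.ReflTransGen.single h)
        ⟨Relation.ReflTransGen.single ⟨rfl, rfl⟩,
         Relation.ReflTransGen.single trivial⟩
    · by_contra h
      exact hmin (.inr (.inl (.inr (.inl (b, c))))) (by simp)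
        (Relation.ReflTransGen.single h)
        ⟨Relation.ReflTransGen.single rfl, Relation.ReflTransGen.single rfl⟩
    · by_contra h
      exact hmin (.inr (.inl (.inr (.inr (c, a))))) (by simp)
        (Relation.ReflTransGen.single h)
        ⟨Relation.ReflTransGen.single rfl, Relation.ReflTransGen.single rfl⟩

end Hyperclique
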